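/- For all positive integers p and n, the total number m_n^{(p)} of p-watermelons of length 2n equals the p×p determinant det_{0≤i,j<p}( C(2n, n+i−j) ), where C(a,b) denotes the binomial coefficient. -/

import Mathlib

open scoped BigOperators
open Filter

/-- Binomial coefficient with integer lower argument, `0` outside range. -/
def ichoose (a : ℕ) (b : ℤ) : ℕ := if 0 ≤ b then a.choose b.toNat else 0

/-- A `p`-watermelon of length `2n` (no wall): the `i`-th branch starts at `(0,2i)`,
ends at `(2n,2i)`, takes steps `(1,1)` or `(1,-1)`, and no two branches share a point.
`y i t` is the ordinate of the `i`-th branch at abscissa `t`. -/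
def IsMelon (p n : ℕ) (y : Fin p → Fin (2*n+1) → ℤ) : Prop :=
  (∀ i, y i 0 = 2 * (i : ℤ)) ∧
  (∀ i, y i (Fin.last (2*n)) = 2 * (i : ℤ)) ∧
  (∀ i (t : Fin (2*n)), y i t.succ - y i t.castSucc = 1 ∨ y i t.succ - y i t.castSucc = -1) ∧
  (∀ i j, i ≠ j → ∀ t, y i t ≠ y j t)

/-- The height of a watermelon: the maximal ordinate reached (by its top-most branch). -/
noncomputable def melonHeight {p n : ℕ} (y : Fin p → Fin (2*n+1) → ℤ) : ℤ :=
  sSup {v | ∃ i t, y i t = v}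

/-- The depth of a watermelon: the minimal ordinate reached (by its bottom-most branch). -/
noncomputable def melonDepth {p n : ℕ} (y : Fin p → Fin (2*n+1) → ℤ) : ℤ :=
  sInf {v | ∃ i t, y i t = v}

/-- The range of a watermelon: height minus depth. -/
noncomputable def melonRange {p n : ℕ} (y : Fin p → Fin (2*n+1) → ℤ) : ℤ :=
  melonHeight y - melonDepth y

/-!
This is the Lindström–Gessel–Viennot argument. Expanding the determinant by the Leibniz formula
turns it into a signed count of families of `±1` lattice paths, the `i`-th running from `(0, 2i)`
to `(2n, 2σ(i))`, with `C(2n, n+i-j)` counting the paths from height `2j` to height `2i`.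
Exchanging the tails of two paths after the first time at which some paths meet is a
sign-reversing involution on the intersecting families; it is an involution because the meeting
time and the exchanged pair are read off the family up to that time only, which the exchange
does not touch. Only non-intersecting families survive, and since paths at even height difference
cannot cross without meeting, those have `σ = 1`: they are exactly the watermelons.
-/

open Equiv Function Finset

lemma Nat.card_subtype_eq_card_and_add_card_and_not {α : Type*} (P Q : α → Prop)
    [Finite {x // P x}] :
    Nat.card {x // P x} = Nat.card {x // P x ∧ Q x} + Nat.card {x // P x ∧ ¬Q x} := by
  classical
  rw [← Nat.card_congr (Equiv.subtypeSubtypeEquivSubtypeInter P Q),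
    ← Nat.card_congr (Equiv.subtypeSubtypeEquivSubtypeInter P (¬Q ·)), ← Nat.card_sum,
    Nat.card_congr (Equiv.sumCompl fun x : {x // P x} => Q x)]

namespace LatticePath

variable {V ι : Type*}

def IsPath (R : V → V → Prop) (m : ℕ) (u v : V) (z : Fin (m + 1) → V) : Prop :=
  z 0 = u ∧ z (Fin.last m) = v ∧ ∀ t : Fin m, R (z t.castSucc) (z t.succ)

noncomputable def pathCount (R : V → V → Prop) (m : ℕ) (u v : V) : ℕ :=
  Nat.card {z // IsPath R m u v z}

def IsPathFamily (R : V → V → Prop) (m : ℕ) (a b : ι → V) (σ : Perm ι)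
    (y : ι → Fin (m + 1) → V) : Prop :=
  ∀ i, IsPath R m (a i) (b (σ i)) (y i)

def NonIntersecting {m : ℕ} (y : ι → Fin (m + 1) → V) : Prop :=
  ∀ t, Injective fun i => y i t

section CollisionSwap

variable [DecidableEq ι] (c : ι → V)

open Classical in
noncomputable def collisionSwap : Perm ι :=
  if h : ∃ q : ι × ι, q.1 ≠ q.2 ∧ c q.1 = c q.2 then swap h.choose.1 h.choose.2 else 1

lemma collisionSwap_eq_swap (hc : ¬Injective c) :
    ∃ i j, i ≠ j ∧ c i = c j ∧ collisionSwap c = swap i j := by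
  have h : ∃ q : ι × ι, q.1 ≠ q.2 ∧ c q.1 = c q.2 := by
    obtain ⟨i, j, hij, hne⟩ := not_injective_iff.mp hc
    exact ⟨(i, j), hne, hij⟩
  exact ⟨_, _, h.choose_spec.1, h.choose_spec.2, dif_pos h⟩

lemma collisionSwap_of_injective (hc : Injective c) : collisionSwap c = 1 :=
  dif_neg fun ⟨_, hne, hq⟩ => hne (hc hq)

lemma apply_collisionSwap (k : ι) : c (collisionSwap c k) = c k := by
  by_cases hc : Injective c
  · rw [collisionSwap_of_injective c hc, Perm.one_apply]
  obtain ⟨i, j, -, hij, h⟩ := collisionSwap_eq_swap c hc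
  rw [h]
  rcases eq_or_ne k i with rfl | hki
  · rw [swap_apply_left, hij]
  rcases eq_or_ne k j with rfl | hkj
  · rw [swap_apply_right, hij]
  · rw [swap_apply_of_ne_of_ne hki hkj]

lemma collisionSwap_involutive : Involutive (collisionSwap c) := by
  by_cases hc : Injective c
  · simp [collisionSwap_of_injective c hc, Involutive]
  obtain ⟨i, j, -, -, h⟩ := collisionSwap_eq_swap c hc
  exact h ▸ swap_apply_self i j

lemma sign_collisionSwap [Fintype ι] (hc : ¬Injective c) : Perm.sign (collisionSwap c) = -1 := by
  obtain ⟨i, j, hij, -, h⟩ := collisionSwap_eq_swap c hc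
  rw [h, Perm.sign_swap hij]

end CollisionSwap

section TailSwap

variable {m : ℕ}

noncomputable def firstMeeting (y : ι → Fin (m + 1) → V) (h : ¬NonIntersecting y) : Fin (m + 1) :=
  wellFounded_lt.min {t | ¬Injective fun i => y i t} (not_forall.mp h)

lemma not_injective_firstMeeting (y : ι → Fin (m + 1) → V) (h : ¬NonIntersecting y) :
    ¬Injective fun i => y i (firstMeeting y h) :=
  wellFounded_lt.min_mem {t | ¬Injective fun i => y i t} (not_forall.mp h)

lemma firstMeeting_eq_of_agree {y y' : ι → Fin (m + 1) → V} (h : ¬NonIntersecting y)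
    (h' : ¬NonIntersecting y') (hy : ∀ k t, t ≤ firstMeeting y h → y' k t = y k t) :
    firstMeeting y' h' = firstMeeting y h := by
  have hcol : ∀ t ≤ firstMeeting y h, (fun i => y' i t) = fun i => y i t :=
    fun t ht => funext fun k => hy k t ht
  have hle : firstMeeting y' h' ≤ firstMeeting y h := wellFounded_lt.min_le <| by
    simpa [hcol _ le_rfl] using not_injective_firstMeeting y h
  refine le_antisymm hle (wellFounded_lt.min_le ?_)
  simpa [hcol _ hle] using not_injective_firstMeeting y' h'

def tailSwap (y : ι → Fin (m + 1) → V) (T : Fin (m + 1)) (τ : Perm ι) : ι → Fin (m + 1) → V :=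
  fun k t => if t ≤ T then y k t else y (τ k) t

variable {y : ι → Fin (m + 1) → V} {T t : Fin (m + 1)} {τ : Perm ι}

lemma tailSwap_of_le (k : ι) (ht : t ≤ T) : tailSwap y T τ k t = y k t := if_pos ht

lemma tailSwap_of_ge (hτ : ∀ k, y (τ k) T = y k T) (k : ι) (ht : T ≤ t) :
    tailSwap y T τ k t = y (τ k) t := by
  rcases ht.lt_or_eq with ht | rfl
  · exact if_neg ht.not_ge
  · rw [tailSwap_of_le k le_rfl, hτ]

lemma tailSwap_tailSwap (hτ : Involutive τ) : tailSwap (tailSwap y T τ) T τ = y := by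
  funext k t
  by_cases ht : t ≤ T
  · simp only [tailSwap, if_pos ht]
  · simp only [tailSwap, if_neg ht, hτ k]

lemma IsPathFamily.tailSwap {R : V → V → Prop} {a b : ι → V} {σ : Perm ι}
    (hy : IsPathFamily R m a b σ y) (hτ : ∀ k, y (τ k) T = y k T) :
    IsPathFamily R m a b (σ * τ) (tailSwap y T τ) := by
  intro k
  refine ⟨(tailSwap_of_le k (Fin.zero_le T)).trans (hy k).1,
    (tailSwap_of_ge hτ k (Fin.le_last T)).trans (hy (τ k)).2.1, fun t => ?_⟩
  by_cases ht : t.succ ≤ T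
  · rw [tailSwap_of_le k ht, tailSwap_of_le k (Fin.castSucc_lt_succ.le.trans ht)]
    exact (hy k).2.2 t
  · have ht' : T ≤ t.castSucc := Fin.le_castSucc_iff.mpr (not_le.mp ht)
    rw [tailSwap_of_ge hτ k ht', tailSwap_of_ge hτ k (ht'.trans Fin.castSucc_lt_succ.le)]
    exact (hy (τ k)).2.2 t

end TailSwap

section LGV

variable {R : V → V → Prop} {m : ℕ} {a b : ι → V}

variable (R m a b) in
abbrev IntersectingConfig :=
  Σ σ : Perm ι, {y : ι → Fin (m + 1) → V // IsPathFamily R m a b σ y ∧ ¬NonIntersecting y}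

namespace IntersectingConfig

noncomputable def meetingTime (x : IntersectingConfig R m a b) : Fin (m + 1) :=
  firstMeeting x.2.1 x.2.2.2

lemma not_injective_meetingTime (x : IntersectingConfig R m a b) :
    ¬Injective fun i => x.2.1 i x.meetingTime :=
  not_injective_firstMeeting _ _

variable [DecidableEq ι]

noncomputable def meetingSwap (x : IntersectingConfig R m a b) : Perm ι :=
  collisionSwap fun i => x.2.1 i x.meetingTime

noncomputable def switch (x : IntersectingConfig R m a b) : IntersectingConfig R m a b :=
  ⟨x.1 * x.meetingSwap, tailSwap x.2.1 x.meetingTime x.meetingSwap,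
    x.2.2.1.tailSwap (apply_collisionSwap fun i => x.2.1 i x.meetingTime),
    fun h => x.not_injective_meetingTime <| by
      simpa only [tailSwap_of_le _ le_rfl] using h x.meetingTime⟩

lemma switch_fst (x : IntersectingConfig R m a b) : x.switch.1 = x.1 * x.meetingSwap := rfl

lemma switch_snd (x : IntersectingConfig R m a b) :
    x.switch.2.1 = tailSwap x.2.1 x.meetingTime x.meetingSwap := rfl

lemma meetingTime_switch (x : IntersectingConfig R m a b) : x.switch.meetingTime = x.meetingTime :=
  firstMeeting_eq_of_agree _ _ fun k _ ht => tailSwap_of_le k ht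

lemma meetingSwap_switch (x : IntersectingConfig R m a b) :
    x.switch.meetingSwap = x.meetingSwap := by
  rw [meetingSwap, meetingTime_switch, switch_snd]
  congr 1
  funext i
  exact tailSwap_of_le i le_rfl

lemma switch_switch (x : IntersectingConfig R m a b) : x.switch.switch = x := by
  have hτ : Involutive x.meetingSwap := collisionSwap_involutive _
  refine Sigma.subtype_ext ?_ ?_
  · ext k
    rw [switch_fst, switch_fst, meetingSwap_switch, Perm.mul_apply, Perm.mul_apply, hτ k]
  · rw [switch_snd, switch_snd, meetingSwap_switch, meetingTime_switch]
    exact tailSwap_tailSwap hτ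

lemma sign_switch [Fintype ι] (x : IntersectingConfig R m a b) :
    Perm.sign x.switch.1 = -Perm.sign x.1 := by
  rw [switch_fst, Perm.sign_mul, meetingSwap, sign_collisionSwap _ x.not_injective_meetingTime,
    mul_neg_one]

lemma sum_sign [Fintype ι] [Fintype (IntersectingConfig R m a b)] :
    ∑ x : IntersectingConfig R m a b, (Perm.sign x.1 : ℤ) = 0 := by
  have hpair (x : IntersectingConfig R m a b) :
      (Perm.sign x.1 : ℤ) + Perm.sign x.switch.1 = 0 := by
    rw [sign_switch, Units.val_neg, add_neg_cancel]
  refine Finset.sum_ninvolution switch hpair (fun x hx hfix => hx ?_) (fun _ => mem_univ _)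
    switch_switch
  have := hpair x
  rw [hfix] at this
  omega

end IntersectingConfig

lemma card_isPathFamily [Fintype ι] (σ : Perm ι) :
    Nat.card {y // IsPathFamily R m a b σ y} = ∏ i, pathCount R m (a i) (b (σ i)) :=
  (Nat.card_congr Equiv.subtypePiEquivPi).trans Nat.card_pi

variable [∀ u v, Finite {z // IsPath R m u v z}]

instance [Finite ι] (σ : Perm ι) : Finite {y // IsPathFamily R m a b σ y} :=
  Finite.of_equiv _ Equiv.subtypePiEquivPi.symm

lemma sum_sign_mul_card_not_nonIntersecting [Fintype ι] [DecidableEq ι] :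
    ∑ σ : Perm ι, Perm.sign σ * (Nat.card {y // IsPathFamily R m a b σ y ∧ ¬NonIntersecting y} : ℤ)
      = 0 := by
  have (σ : Perm ι) : Fintype {y // IsPathFamily R m a b σ y ∧ ¬NonIntersecting y} :=
    have := Finite.of_equiv _ (Equiv.subtypeSubtypeEquivSubtypeInter (IsPathFamily R m a b σ)
      (¬NonIntersecting ·))
    Fintype.ofFinite _
  simp only [Nat.card_eq_fintype_card,
    ← IntersectingConfig.sum_sign (R := R) (m := m) (a := a) (b := b), Fintype.sum_sigma,
    Finset.sum_const, card_univ, nsmul_eq_mul, mul_comm]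

/-- The Lindström–Gessel–Viennot lemma. -/
theorem det_pathCount [Fintype ι] [DecidableEq ι] (a b : ι → V) :
    (Matrix.of fun i j => (pathCount R m (a j) (b i) : ℤ)).det =
      ∑ σ : Perm ι,
        Perm.sign σ * (Nat.card {y // IsPathFamily R m a b σ y ∧ NonIntersecting y} : ℤ) := by
  calc _ = ∑ σ : Perm ι, (Perm.sign σ *
        (Nat.card {y // IsPathFamily R m a b σ y ∧ NonIntersecting y} : ℤ) + Perm.sign σ *
        (Nat.card {y // IsPathFamily R m a b σ y ∧ ¬NonIntersecting y} : ℤ)) := by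
        refine (Matrix.det_apply' _).trans (sum_congr rfl fun σ _ => ?_)
        simp only [Matrix.of_apply, Int.cast_id, ← mul_add, ← Nat.cast_prod, ← Nat.cast_add,
          ← card_isPathFamily, ← Nat.card_subtype_eq_card_and_add_card_and_not]
    _ = _ := by rw [sum_add_distrib, sum_sign_mul_card_not_nonIntersecting, add_zero]

end LGV

section LatticeWalk

def IsLatticeStep (u v : ℤ) : Prop := v - u = 1 ∨ v - u = -1

variable {m : ℕ}

def upSteps (z : Fin (m + 1) → ℤ) : Finset (Fin m) := {t | z t.succ - z t.castSucc = 1}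

def stepOf (S : Finset (Fin m)) (t : Fin m) : ℤ := if t ∈ S then 1 else -1

def walkOf (u : ℤ) (S : Finset (Fin m)) (t : Fin (m + 1)) : ℤ := u + Fin.partialSum (stepOf S) t

lemma sum_stepOf (S : Finset (Fin m)) : ∑ t, stepOf S t = 2 * #S - m := by
  have hS := card_finset_fin_le S
  simp only [stepOf]
  rw [Finset.sum_ite]
  simp only [filter_mem_eq_inter, univ_inter, sum_const, nsmul_eq_mul, mul_one,
    mul_neg, filter_not, ← compl_eq_univ_sdiff, card_compl, Fintype.card_fin]
  omega

lemma walkOf_succ_sub (u : ℤ) (S : Finset (Fin m)) (t : Fin m) :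
    walkOf u S t.succ - walkOf u S t.castSucc = stepOf S t := by
  rw [walkOf, walkOf, Fin.partialSum_succ]
  ring

lemma walkOf_zero (u : ℤ) (S : Finset (Fin m)) : walkOf u S 0 = u := by
  simp [walkOf]

lemma walkOf_last (u : ℤ) (S : Finset (Fin m)) : walkOf u S (Fin.last m) = u + 2 * #S - m := by
  rw [walkOf, Fin.partialSum, Fin.val_last, List.take_of_length_le (by simp), List.sum_ofFn,
    sum_stepOf, add_sub_assoc]

lemma upSteps_walkOf (u : ℤ) (S : Finset (Fin m)) : upSteps (walkOf u S) = S := by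
  ext t
  simp only [upSteps, mem_filter, mem_univ, true_and, walkOf_succ_sub, stepOf]
  split_ifs with h <;> simp [h]

lemma isLatticeStep_walkOf (u : ℤ) (S : Finset (Fin m)) (t : Fin m) :
    IsLatticeStep (walkOf u S t.castSucc) (walkOf u S t.succ) := by
  rw [IsLatticeStep, walkOf_succ_sub, stepOf]
  split_ifs <;> simp

lemma walkOf_upSteps {z : Fin (m + 1) → ℤ}
    (hz : ∀ t : Fin m, IsLatticeStep (z t.castSucc) (z t.succ)) :
    walkOf (z 0) (upSteps z) = z := by
  have hstep : stepOf (upSteps z) = fun t => -z t.castSucc + z t.succ := by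
    funext t
    simp only [stepOf, upSteps, mem_filter, mem_univ, true_and]
    rcases hz t with h | h <;> simp [h] <;> omega
  conv_rhs => rw [← Fin.partialSum_left_neg z]
  funext t
  rw [walkOf, hstep]
  rfl

lemma last_eq_of_isLatticeStep {z : Fin (m + 1) → ℤ}
    (hz : ∀ t : Fin m, IsLatticeStep (z t.castSucc) (z t.succ)) :
    z (Fin.last m) = z 0 + 2 * #(upSteps z) - m := by
  conv_lhs => rw [← walkOf_upSteps hz]
  exact walkOf_last _ _

def latticePathEquiv (m : ℕ) (u v : ℤ) :
    {z // IsPath IsLatticeStep m u v z} ≃ {S : Finset (Fin m) // u + 2 * #S - m = v} where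
  toFun z := ⟨upSteps z.1, by
    obtain ⟨z, rfl, rfl, hz⟩ := z
    exact (last_eq_of_isLatticeStep hz).symm⟩
  invFun S := ⟨walkOf u S.1, walkOf_zero u S.1, (walkOf_last u S.1).trans S.2,
    isLatticeStep_walkOf u S.1⟩
  left_inv z := by
    obtain ⟨z, rfl, -, hz⟩ := z
    exact Subtype.ext (walkOf_upSteps hz)
  right_inv S := Subtype.ext (upSteps_walkOf u S.1)

instance (m : ℕ) (u v : ℤ) : Finite {z // IsPath IsLatticeStep m u v z} :=
  Finite.of_equiv _ (latticePathEquiv m u v).symm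

theorem pathCount_isLatticeStep {m : ℕ} {u v k : ℤ} (hk : 2 * k = v - u + m) :
    pathCount IsLatticeStep m u v = ichoose m k := by
  rw [pathCount, Nat.card_congr (latticePathEquiv m u v), ichoose]
  split_ifs with hk0
  · have hcard (S : Finset (Fin m)) : u + 2 * #S - m = v ↔ #S = k.toNat := by omega
    rw [Nat.card_congr (Equiv.subtypeEquivRight hcard), Nat.card_eq_fintype_card,
      Fintype.card_finset_len, Fintype.card_fin]
  · exact Nat.card_eq_zero.mpr (Or.inl ⟨fun S => by omega⟩)

lemma lt_of_forall_ne {m : ℕ} {z w : Fin (m + 1) → ℤ}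
    (hz : ∀ t : Fin m, IsLatticeStep (z t.castSucc) (z t.succ))
    (hw : ∀ t : Fin m, IsLatticeStep (w t.castSucc) (w t.succ)) (h0 : z 0 < w 0)
    (hpar : 2 ∣ w 0 - z 0) (hne : ∀ t, z t ≠ w t) (t : Fin (m + 1)) : z t < w t := by
  suffices z t < w t ∧ 2 ∣ w t - z t from this.1
  induction t using Fin.induction with
  | zero => exact ⟨h0, hpar⟩
  | succ t ih =>
    have := hz t
    have := hw t
    have := hne t.succ
    unfold IsLatticeStep at *
    omega

theorem perm_eq_one_of_nonIntersecting [LinearOrder ι] [Finite ι] {m : ℕ} {a b : ι → ℤ}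
    (ha : StrictMono a) (hb : StrictMono b) (hpar : ∀ i j, 2 ∣ a j - a i) {σ : Perm ι}
    {y : ι → Fin (m + 1) → ℤ} (hy : IsPathFamily IsLatticeStep m a b σ y)
    (hni : NonIntersecting y) : σ = 1 := by
  have hσ : StrictMono σ := fun i j hij => hb.lt_iff_lt.mp <| by
    rw [← (hy i).2.1, ← (hy j).2.1]
    refine lt_of_forall_ne (hy i).2.2 (hy j).2.2 ?_ ?_ (fun t h => hij.ne (hni t h)) _
    · rw [(hy i).1, (hy j).1]
      exact ha hij
    · rw [(hy i).1, (hy j).1]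
      exact hpar i j
  exact Perm.ext fun i => hσ.apply_eq

end LatticeWalk

end LatticePath

open LatticePath

lemma isMelon_iff {p n : ℕ} (y : Fin p → Fin (2 * n + 1) → ℤ) :
    IsMelon p n y ↔ IsPathFamily IsLatticeStep (2 * n) (fun i : Fin p => 2 * (i : ℤ))
      (fun i => 2 * (i : ℤ)) 1 y ∧ NonIntersecting y :=
  ⟨fun ⟨h0, hl, hs, hd⟩ => ⟨fun i => ⟨h0 i, hl i, hs i⟩,
      fun t i j h => by_contra fun hij => hd i j hij t h⟩,
    fun ⟨hy, hni⟩ => ⟨fun i => (hy i).1, fun i => (hy i).2.1, fun i => (hy i).2.2,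
      fun _ _ hij t h => hij (hni t h)⟩⟩

theorem stmt1 (p n : ℕ) :
    (Nat.card {y : Fin p → Fin (2*n+1) → ℤ // IsMelon p n y} : ℤ) =
      Matrix.det (Matrix.of fun i j : Fin p =>
        (ichoose (2*n) ((n : ℤ) + (i : ℤ) - (j : ℤ)) : ℤ)) := by
  let a (i : Fin p) : ℤ := 2 * i
  have ha : StrictMono a := fun i j hij => by simpa [a] using hij
  have hM : (Matrix.of fun i j : Fin p => (ichoose (2*n) ((n : ℤ) + (i : ℤ) - (j : ℤ)) : ℤ)) =
      Matrix.of fun i j => (pathCount IsLatticeStep (2 * n) (a j) (a i) : ℤ) := by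
    ext i j
    rw [Matrix.of_apply, Matrix.of_apply, pathCount_isLatticeStep]
    push_cast
    ring
  rw [hM, det_pathCount, sum_eq_single 1, Perm.sign_one, Units.val_one, one_mul,
    Nat.card_congr (Equiv.subtypeEquivRight isMelon_iff)]
  · intro σ _ hσ
    have hpar (i j : Fin p) : 2 ∣ a j - a i := ⟨j - i, by ring⟩
    have : IsEmpty {y // IsPathFamily IsLatticeStep (2 * n) a a σ y ∧ NonIntersecting y} :=
      ⟨fun y => hσ (perm_eq_one_of_nonIntersecting ha ha hpar y.2.1 y.2.2)⟩
    rw [Nat.card_of_isEmpty, Nat.cast_zero, mul_zero]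
  · exact fun h => absurd (mem_univ 1) h
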